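/- arXiv:2205.10205 — 2 statements merged into one kernel-verified Lean document; each statement's English description precedes it below -/
import Mathlib

section
/- Let a ≥ 2 be real. The function h₁(x) = x^{-a/2} γ(a, ax) is nondecreasing on the interval (0, 1/2], where γ(a, t) = ∫₀ᵗ s^{a-1} e^{-s} ds is the lower incomplete gamma function. -/
open Real Set

/-- The lower incomplete gamma function `γ(a, t) = ∫₀ᵗ s^{a-1} e^{-s} ds`. -/
noncomputable def lowerIncGamma (a t : ℝ) : ℝ :=
  ∫ s in (0 : ℝ)..t, s ^ (a - 1) * Real.exp (-s)

lemma lig_cont_integrand (a : ℝ) (ha : 2 ≤ a) :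
    Continuous (fun s : ℝ => s ^ (a - 1) * Real.exp (-s)) := by
  exact (continuous_id.rpow_const (fun x => Or.inr (by linarith))).mul
    (Real.continuous_exp.comp continuous_neg)

lemma lig_hasDerivAt (a : ℝ) (ha : 2 ≤ a) (t : ℝ) :
    HasDerivAt (lowerIncGamma a) (t ^ (a - 1) * Real.exp (-t)) t :=
  ((lig_cont_integrand a ha).integral_hasStrictDerivAt 0 t).hasDerivAt

/-- Key inequality: `γ(a, t) ≤ (2/a) t^a e^{-t}` for `0 ≤ t ≤ a/2`. -/
lemma lig_key (a : ℝ) (ha : 2 ≤ a) {t : ℝ} (ht0 : 0 ≤ t) (ht2 : t ≤ a / 2) :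
    lowerIncGamma a t ≤ 2 / a * t ^ a * Real.exp (-t) := by
  have ha0 : (0 : ℝ) < a := by linarith
  set F : ℝ → ℝ := fun t => 2 / a * t ^ a * Real.exp (-t) - lowerIncGamma a t with hF
  have hmono : MonotoneOn F (Icc 0 (a / 2)) := by
    apply monotoneOn_of_deriv_nonneg (convex_Icc _ _)
    · apply ContinuousOn.sub
      · apply ContinuousOn.mul
        · exact (continuousOn_const.mul
            (continuous_id.rpow_const (fun x => Or.inr ha0.le)).continuousOn)
        · exact (Real.continuous_exp.comp continuous_neg).continuousOn
      · intro x _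
        exact ((lig_hasDerivAt a ha x).continuousAt).continuousWithinAt
    · intro x hx
      rw [interior_Icc] at hx
      have hx0 : (0 : ℝ) < x := hx.1
      have h1 : HasDerivAt (fun t : ℝ => t ^ a) (a * x ^ (a - 1)) x :=
        Real.hasDerivAt_rpow_const (Or.inl hx0.ne')
      have h2 : HasDerivAt (fun t : ℝ => Real.exp (-t)) (-Real.exp (-x)) x := by
        simpa [Function.comp_def] using ((Real.hasDerivAt_exp (-x)).comp x ((hasDerivAt_id x).neg))
      exact (((h1.const_mul (2 / a)).mul h2).sub (lig_hasDerivAt a ha x)).differentiableAt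
        |>.differentiableWithinAt
    · intro x hx
      rw [interior_Icc] at hx
      have hx0 : (0 : ℝ) < x := hx.1
      have h1 : HasDerivAt (fun t : ℝ => t ^ a) (a * x ^ (a - 1)) x :=
        Real.hasDerivAt_rpow_const (Or.inl hx0.ne')
      have h2 : HasDerivAt (fun t : ℝ => Real.exp (-t)) (-Real.exp (-x)) x := by
        simpa [Function.comp_def] using ((Real.hasDerivAt_exp (-x)).comp x ((hasDerivAt_id x).neg))
      have hD : HasDerivAt F
          (2 / a * (a * x ^ (a - 1)) * Real.exp (-x) + 2 / a * x ^ a * -Real.exp (-x)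
            - x ^ (a - 1) * Real.exp (-x)) x := by
        have := ((h1.const_mul (2 / a)).mul h2).sub (lig_hasDerivAt a ha x)
        exact this
      rw [hD.deriv]
      have hxa : x ^ a = x ^ (a - 1) * x := by
        rw [← Real.rpow_add_one hx0.ne' (a - 1)]
        ring_nf
      rw [hxa]
      have key : 2 / a * (a * x ^ (a - 1)) * Real.exp (-x)
          + 2 / a * (x ^ (a - 1) * x) * -Real.exp (-x) - x ^ (a - 1) * Real.exp (-x)
          = x ^ (a - 1) * Real.exp (-x) * (1 - 2 / a * x) := by
        field_simp
        ring
      rw [key]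
      have h3 : 0 ≤ 1 - 2 / a * x := by
        rw [sub_nonneg, div_mul_eq_mul_div, div_le_one ha0]
        nlinarith [hx.2]
      positivity
  have h0 : F 0 = 0 := by
    simp [hF, lowerIncGamma, Real.zero_rpow ha0.ne']
  have := hmono (left_mem_Icc.2 (by linarith)) ⟨ht0, ht2⟩ ht0
  rw [h0] at this
  simp only [hF, sub_nonneg] at this
  exact this

/-- For a real `a ≥ 2`, the function `x ↦ x^{-a/2} γ(a, ax)` is nondecreasing on `(0, 1/2]`. -/
theorem stmt_1 (a : ℝ) (ha : 2 ≤ a) :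
    MonotoneOn (fun x : ℝ => x ^ (-(a / 2)) * lowerIncGamma a (a * x)) (Set.Ioc 0 (1 / 2)) := by
  have ha0 : (0 : ℝ) < a := by linarith
  have hDeriv : ∀ x : ℝ, 0 < x →
      HasDerivAt (fun x : ℝ => x ^ (-(a / 2)) * lowerIncGamma a (a * x))
        (-(a / 2) * x ^ (-(a / 2) - 1) * lowerIncGamma a (a * x)
          + x ^ (-(a / 2)) * ((a * x) ^ (a - 1) * Real.exp (-(a * x)) * a)) x := by
    intro x hx0
    have h1 : HasDerivAt (fun x : ℝ => x ^ (-(a / 2))) (-(a / 2) * x ^ (-(a / 2) - 1)) x :=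
      Real.hasDerivAt_rpow_const (Or.inl hx0.ne')
    have h2 : HasDerivAt (fun x : ℝ => lowerIncGamma a (a * x))
        ((a * x) ^ (a - 1) * Real.exp (-(a * x)) * a) x := by
      have hinner : HasDerivAt (fun y : ℝ => a * y) a x := by
        simpa using (hasDerivAt_id x).const_mul a
      exact (lig_hasDerivAt a ha (a * x)).comp x hinner
    exact h1.mul h2
  apply monotoneOn_of_deriv_nonneg (convex_Ioc _ _)
  · intro x hx
    exact (hDeriv x hx.1).continuousAt.continuousWithinAt
  · rw [interior_Ioc]
    intro x hx
    exact (hDeriv x hx.1).differentiableAt.differentiableWithinAt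
  · rw [interior_Ioc]
    intro x hx
    obtain ⟨hx0, hx2⟩ := hx
    rw [(hDeriv x hx0).deriv]
    have hax0 : (0 : ℝ) < a * x := mul_pos ha0 hx0
    have hkey : lowerIncGamma a (a * x) ≤ 2 / a * (a * x) ^ a * Real.exp (-(a * x)) :=
      lig_key a ha hax0.le (by nlinarith)
    -- rewrite the second term
    have e1 : x ^ (-(a / 2)) = x ^ (-(a / 2) - 1) * x := by
      rw [← Real.rpow_add_one hx0.ne' (-(a / 2) - 1)]
      ring_nf
    have e2 : (a * x) ^ a = (a * x) ^ (a - 1) * (a * x) := by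
      rw [← Real.rpow_add_one hax0.ne' (a - 1)]
      ring_nf
    have hpow : (0 : ℝ) < x ^ (-(a / 2) - 1) := Real.rpow_pos_of_pos hx0 _
    have hterm : x ^ (-(a / 2)) * ((a * x) ^ (a - 1) * Real.exp (-(a * x)) * a)
        = x ^ (-(a / 2) - 1) * ((a * x) ^ a * Real.exp (-(a * x))) := by
      rw [e1, e2]; ring
    rw [hterm]
    have hbound : -(a / 2) * x ^ (-(a / 2) - 1) * lowerIncGamma a (a * x)
        ≥ -(a / 2) * x ^ (-(a / 2) - 1) * (2 / a * (a * x) ^ a * Real.exp (-(a * x))) := by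
      apply mul_le_mul_of_nonpos_left hkey
      nlinarith
    have heq : -(a / 2) * x ^ (-(a / 2) - 1) * (2 / a * (a * x) ^ a * Real.exp (-(a * x)))
        = -(x ^ (-(a / 2) - 1) * ((a * x) ^ a * Real.exp (-(a * x)))) := by
      field_simp
    linarith [hbound, heq ▸ hbound]
end

section
/- For every real a ≥ 2 and every x ∈ [0, 1/2], the lower incomplete gamma function satisfies γ(a, ax) ≤ (2x)^{a/2} Γ(a). -/
open Real

/-- For every real `a ≥ 2` and every `x ∈ [0, 1/2]`, `γ(a, ax) ≤ (2x)^{a/2} Γ(a)`. -/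
theorem stmt_2 (a x : ℝ) (ha : 2 ≤ a) (hx : x ∈ Set.Icc (0 : ℝ) (1 / 2)) :
    lowerIncGamma a (a * x) ≤ (2 * x) ^ (a / 2) * Real.Gamma a := by
  obtain ⟨hx0, hx2⟩ := hx
  have ha0 : (0:ℝ) < a := by linarith
  rcases eq_or_lt_of_le hx0 with h0 | hxpos
  · -- x = 0 case
    rw [← h0]
    simp [lowerIncGamma, Real.zero_rpow (by positivity : a / 2 ≠ 0)]
  -- x > 0
  have h1x : (0:ℝ) < 1 - x := by linarith
  have haxpos : 0 < a * x := by positivity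
  have hcont : Continuous fun s : ℝ => s ^ (a - 1) * Real.exp (-s) := by
    exact (Real.continuous_rpow_const (by linarith)).mul (Real.continuous_exp.comp continuous_neg)
  have hcontg : Continuous fun s : ℝ => s ^ (a - 1) * Real.exp (-(1 / x * s)) := by
    exact (Real.continuous_rpow_const (by linarith)).mul
      (Real.continuous_exp.comp ((continuous_const.mul continuous_id).neg))
  have hIntg : MeasureTheory.IntegrableOn (fun s : ℝ => s ^ (a - 1) * Real.exp (-(1 / x * s)))
      (Set.Ioi 0) := by
    have h := integrableOn_rpow_mul_exp_neg_mul_rpow (s := a - 1) (p := 1) (b := 1 / x)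
      (by linarith) one_pos (by positivity)
    simpa [Real.rpow_one, neg_mul] using h
  have hval : ∫ s in Set.Ioi 0, s ^ (a - 1) * Real.exp (-(1 / x * s)) = x ^ a * Real.Gamma a := by
    rw [Real.integral_rpow_mul_exp_neg_mul_Ioi ha0 (by positivity : (0:ℝ) < 1 / x),
      one_div_one_div]
  have key2 : x * Real.exp (2 - 2 * x) ≤ 2 := by
    have h1 : 2 * x ≤ Real.exp (2 * x - 1) := by
      have := Real.add_one_le_exp (2 * x - 1); linarith
    have h2 : Real.exp (2 * x - 1) * Real.exp (2 - 2 * x) = Real.exp 1 := by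
      rw [← Real.exp_add]; ring_nf
    have h3 : Real.exp 1 < 3 := by
      have := Real.exp_one_lt_d9; linarith
    nlinarith [mul_le_mul_of_nonneg_right h1 (Real.exp_pos (2 - 2 * x)).le,
      (Real.exp_pos (2 - 2 * x)).le]
  -- the base inequality: (exp(1-x)*x)^2 ≤ 2*x
  have hbase : (Real.exp (1 - x) * x) ^ 2 ≤ 2 * x := by
    have he : Real.exp (1 - x) * Real.exp (1 - x) = Real.exp (2 - 2 * x) := by
      rw [← Real.exp_add]; ring_nf
    have h4 : (Real.exp (1 - x) * x) ^ 2 = x * (x * Real.exp (2 - 2 * x)) := by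
      rw [← he]; ring
    rw [h4]
    nlinarith [mul_le_mul_of_nonneg_left key2 hxpos.le]
  have hfinal : Real.exp ((1 - x) * a) * x ^ a ≤ (2 * x) ^ (a / 2) := by
    have hc0 : (0:ℝ) ≤ Real.exp (1 - x) * x := by positivity
    calc Real.exp ((1 - x) * a) * x ^ a
        = (Real.exp (1 - x)) ^ a * x ^ a := by rw [Real.exp_mul]
      _ = (Real.exp (1 - x) * x) ^ a := (Real.mul_rpow (Real.exp_pos _).le hxpos.le).symm
      _ = ((Real.exp (1 - x) * x) ^ (2:ℕ)) ^ (a / 2) := by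
          rw [← Real.rpow_natCast (Real.exp (1 - x) * x) 2, ← Real.rpow_mul hc0]
          norm_num
          congr 1
          ring
      _ ≤ (2 * x) ^ (a / 2) := by
          refine Real.rpow_le_rpow (by positivity) ?_ (by linarith)
          simpa using hbase
  calc lowerIncGamma a (a * x)
      = ∫ s in Set.Ioc 0 (a * x), s ^ (a - 1) * Real.exp (-s) := by
        rw [lowerIncGamma, intervalIntegral.integral_of_le haxpos.le]
    _ ≤ ∫ s in Set.Ioc 0 (a * x),
          Real.exp ((1 - x) * a) * (s ^ (a - 1) * Real.exp (-(1 / x * s))) := by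
        refine MeasureTheory.setIntegral_mono_on
          (hcont.integrableOn_Ioc) ((continuous_const.mul hcontg).integrableOn_Ioc)
          measurableSet_Ioc (fun s hs => ?_)
        obtain ⟨hs0, hsle⟩ := hs
        have hexp : Real.exp (-s) ≤ Real.exp ((1 - x) * a) * Real.exp (-(1 / x * s)) := by
          rw [← Real.exp_add]
          apply Real.exp_le_exp.mpr
          have h2 : 1 / x * s ≤ (1 - x) * a + s := by
            rw [one_div, inv_mul_le_iff₀ hxpos]
            nlinarith [mul_le_mul_of_nonneg_right hsle h1x.le]
          linarith
        calc s ^ (a - 1) * Real.exp (-s)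
            ≤ s ^ (a - 1) * (Real.exp ((1 - x) * a) * Real.exp (-(1 / x * s))) :=
              mul_le_mul_of_nonneg_left hexp (Real.rpow_nonneg hs0.le _)
          _ = Real.exp ((1 - x) * a) * (s ^ (a - 1) * Real.exp (-(1 / x * s))) := by ring
    _ = Real.exp ((1 - x) * a) *
          ∫ s in Set.Ioc 0 (a * x), s ^ (a - 1) * Real.exp (-(1 / x * s)) := by
        rw [MeasureTheory.integral_const_mul]
    _ ≤ Real.exp ((1 - x) * a) *
          ∫ s in Set.Ioi 0, s ^ (a - 1) * Real.exp (-(1 / x * s)) := by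
        refine mul_le_mul_of_nonneg_left ?_ (Real.exp_pos _).le
        refine MeasureTheory.setIntegral_mono_set hIntg ?_
          (HasSubset.Subset.eventuallyLE Set.Ioc_subset_Ioi_self)
        refine MeasureTheory.ae_restrict_of_forall_mem measurableSet_Ioi (fun s hs => ?_)
        have : (0:ℝ) < s := hs
        positivity
    _ = Real.exp ((1 - x) * a) * (x ^ a * Real.Gamma a) := by rw [hval]
    _ ≤ (2 * x) ^ (a / 2) * Real.Gamma a := by
        rw [← mul_assoc]
        exact mul_le_mul_of_nonneg_right hfinal (Real.Gamma_nonneg_of_nonneg ha0.le)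
end
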